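/- Let A ∈ ℝ^{n×n}, let k = p·q, and let R ∈ ℝ^{n×k} with column index identified with Fin q × Fin p. Define the reshaping map Φ sending X ∈ ℝ^{n×(q·p)} (columns indexed by Fin q × Fin p) to X̂ ∈ ℝ^{(q·n)×p} (rows indexed by Fin q × Fin n) by X̂ (a,r) j = X r (a,j), and let Â = Matrix.blockDiagonal (fun _ : Fin q => A) be the (qn)×(qn) block-diagonal matrix. Then for every m, Φ maps the global block Krylov subspace K^m_{A_Gl^p}(A,R) bijectively onto the classical block Krylov subspace K^m_{ℝ^{p×p}}(Â, Φ(R)) = { Σ_{i=0}^{m-1} Â^i Φ(R) γ_i : γ_0,…,γ_{m-1} ∈ ℝ^{p×p} }. In particular, applying the global block Krylov method to AX = B with k = pq right-hand sides is equivalent to applying the classical block Krylov method with p right-hand sides to the qn-dimensional block-diagonal system. -/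

import Mathlib

/-!
`Φ` is a bijective reindexing of entries, so it is injective. It intertwines left multiplication
by `A` with left multiplication by `Â`, and right multiplication by a global coefficient
`bd (fun _ => γ)` with right multiplication by `γ`; hence it maps each global Krylov sum
`∑ Aⁱ R (bd γᵢ)` termwise onto the classical sum `∑ Âⁱ Φ(R) γᵢ`, and every classical sum arises so.
-/

open Matrix

/-- Block-diagonal matrix with block index written first: the canonical
reindexing of `Matrix.blockDiagonal f` along `Equiv.prodComm`. -/
def bd {ι m' : Type*} [DecidableEq ι] (f : ι → Matrix m' m' ℝ) :
    Matrix (ι × m') (ι × m') ℝ :=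
  Matrix.reindex (Equiv.prodComm m' ι) (Equiv.prodComm m' ι) (Matrix.blockDiagonal f)

/-- The global set `A_Gl^p ⊆ ℝ^{k×k}` (for `k = p·q`, column indices identified
with `Fin q × Fin p`). -/
def glSet (p q : ℕ) : Set (Matrix (Fin q × Fin p) (Fin q × Fin p) ℝ) :=
  {M | ∃ c : Matrix (Fin p) (Fin p) ℝ, M = bd (fun _ : Fin q => c)}

/-- The `m`-th block Krylov subspace `K^m_S(A,R)`, with rows indexed by `ρ` and
block columns indexed by `κ`. -/
def blockKrylov {ρ κ : Type*} [Fintype ρ] [DecidableEq ρ] [Fintype κ]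
    (S : Set (Matrix κ κ ℝ)) (A : Matrix ρ ρ ℝ) (R : Matrix ρ κ ℝ) (m : ℕ) :
    Set (Matrix ρ κ ℝ) :=
  {X | ∃ c : Fin m → Matrix κ κ ℝ, (∀ i, c i ∈ S) ∧
    X = ∑ i : Fin m, A ^ (i : ℕ) * R * c i}

/-- The reshaping map `Φ` sending `X ∈ ℝ^{n×(q·p)}` (columns indexed by
`Fin q × Fin p`) to `X̂ ∈ ℝ^{(q·n)×p}` (rows indexed by `Fin q × Fin n`),
`X̂ (a,r) j = X r (a,j)`. -/
def Phi {n p q : ℕ} (X : Matrix (Fin n) (Fin q × Fin p) ℝ) :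
    Matrix (Fin q × Fin n) (Fin p) ℝ :=
  fun ar j => X ar.2 (ar.1, j)

lemma bd_apply {ι m' : Type*} [DecidableEq ι] (f : ι → Matrix m' m' ℝ) (a b : ι) (r s : m') :
    bd f (a, r) (b, s) = if a = b then f a r s else 0 := by
  simp [bd, blockDiagonal_apply]

section Phi

variable {n p q : ℕ}

lemma Phi_injective : Function.Injective (@Phi n p q) := by
  intro X Y h
  ext r ⟨a, j⟩
  exact congrFun (congrFun h (a, r)) j

lemma Phi_sum {ι : Type*} (s : Finset ι) (f : ι → Matrix (Fin n) (Fin q × Fin p) ℝ) :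
    Phi (∑ i ∈ s, f i) = ∑ i ∈ s, Phi (f i) := by
  ext ⟨a, r⟩ j
  simp [Phi, Matrix.sum_apply]

lemma Phi_mul (A : Matrix (Fin n) (Fin n) ℝ) (X : Matrix (Fin n) (Fin q × Fin p) ℝ) :
    Phi (A * X) = bd (fun _ : Fin q => A) * Phi X := by
  ext ⟨a, r⟩ j
  simp only [Phi, mul_apply, Fintype.sum_prod_type]
  rw [Finset.sum_comm]
  simp [bd_apply]

lemma Phi_mul_bd_const (X : Matrix (Fin n) (Fin q × Fin p) ℝ) (c : Matrix (Fin p) (Fin p) ℝ) :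
    Phi (X * bd fun _ : Fin q => c) = Phi X * c := by
  ext ⟨a, r⟩ j
  simp only [Phi, mul_apply, Fintype.sum_prod_type]
  rw [Finset.sum_eq_single a (fun b _ hb => by simp [bd_apply, hb]) (by simp)]
  simp [bd_apply]

lemma Phi_pow_mul (A : Matrix (Fin n) (Fin n) ℝ) (X : Matrix (Fin n) (Fin q × Fin p) ℝ) (i : ℕ) :
    Phi (A ^ i * X) = (bd fun _ : Fin q => A) ^ i * Phi X := by
  induction i with
  | zero => simp
  | succ i ih => rw [pow_succ', Matrix.mul_assoc, Phi_mul, ih, ← Matrix.mul_assoc, ← pow_succ']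

lemma Phi_sum_pow_mul_mul_bd_const {m : ℕ} (A : Matrix (Fin n) (Fin n) ℝ)
    (R : Matrix (Fin n) (Fin q × Fin p) ℝ) (γ : Fin m → Matrix (Fin p) (Fin p) ℝ) :
    Phi (∑ i : Fin m, A ^ (i : ℕ) * R * bd fun _ : Fin q => γ i) =
      ∑ i : Fin m, (bd fun _ : Fin q => A) ^ (i : ℕ) * Phi R * γ i := by
  rw [Phi_sum]
  refine Finset.sum_congr rfl fun i _ => ?_
  rw [Matrix.mul_assoc, Phi_pow_mul, Phi_mul_bd_const, Matrix.mul_assoc]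

end Phi

/-- `Φ` maps the global block Krylov subspace `K^m_{A_Gl^p}(A,R)` bijectively
onto the classical block Krylov subspace `K^m_{ℝ^{p×p}}(Â, Φ(R))`, where
`Â` is the `q`-fold block-diagonal matrix with diagonal blocks `A`: the global
block Krylov method with `k = pq` right-hand sides is equivalent to the
classical block Krylov method with `p` right-hand sides applied to the
`qn`-dimensional block-diagonal system. -/
theorem phi_bijOn_glKrylov {n p q : ℕ} (A : Matrix (Fin n) (Fin n) ℝ)
    (R : Matrix (Fin n) (Fin q × Fin p) ℝ) (m : ℕ) :
    Set.BijOn Phi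
      (blockKrylov (glSet p q) A R m)
      (blockKrylov (Set.univ : Set (Matrix (Fin p) (Fin p) ℝ))
        (bd fun _ : Fin q => A) (Phi R) m) := by
  refine ⟨?_, Phi_injective.injOn, ?_⟩
  · rintro X ⟨c, hc, rfl⟩
    choose γ hγ using hc
    refine ⟨γ, fun _ => trivial, ?_⟩
    simp_rw [hγ]
    exact Phi_sum_pow_mul_mul_bd_const A R γ
  · rintro Y ⟨γ, -, rfl⟩
    exact ⟨_, ⟨fun i => bd fun _ : Fin q => γ i, fun i => ⟨γ i, rfl⟩, rfl⟩,
      Phi_sum_pow_mul_mul_bd_const A R γ⟩
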